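/- Let m be a positive integer and a an integer with a > m. Then ∑_{k=1}^{m} ψ₀(k)·ψ₀(a+1-k)/k = (1/2)·∑_{k=1}^{m} ( ψ₀²(k+a-m)/k + ψ₀²(k)/(k+a-m) - ψ₁(k+a-m)/k + ψ₁(k)/(k+a-m) ) + (1/(a-m) - ψ₀(a+1))·∑_{k=1}^{m} ψ₀(k+a-m)/k + (1/(a-m)²)·(ψ₀(a-m+1) - ψ₀(a+1) + ψ₀(m+1) - ψ₀(1)) - (1/(2(a-m)))·( 2ψ₀(a+1)·(ψ₀(a-m+1) + ψ₀(m+1) - ψ₀(1)) - ψ₀²(a-m+1) + ψ₁(a-m+1) - ψ₀²(a+1) - ψ₁(a+1) ) + (1/6)·( 3ψ₀²(a+1)·(ψ₀(m+1) - ψ₀(a-m+1)) - 3ψ₀(a+1)·( 2ψ₀(1)·ψ₀(a-m+1) - ψ₀²(a-m+1) + ψ₁(a-m+1) - ψ₁(a+1) + ψ₀²(1) + ψ₁(1) ) - ψ₀³(a-m+1) + 3ψ₀(1)·ψ₀²(a-m+1) + 3ψ₁(a+1)·ψ₀(m+1) - 3ψ₀(1)·ψ₁(a-m+1) + 3ψ₀(a-m+1)·(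 ψ₁(a-m+1) - ψ₁(a+1) + ψ₀²(m+1) + ψ₁(m+1) ) - ψ₂(a-m+1) + ψ₀³(a+1) + ψ₂(a+1) ). -/

import Mathlib

open Finset

/-- Digamma function at a positive integer argument: `ψ₀ l = -γ + ∑_{i=1}^{l-1} 1/i`. -/
noncomputable def ψ₀ (l : ℕ) : ℝ :=
  -Real.eulerMascheroniConstant + ∑ i ∈ Finset.range (l - 1), (1 : ℝ) / (i + 1)

/-- Trigamma function at a positive integer argument: `ψ₁ l = π²/6 - ∑_{i=1}^{l-1} 1/i²`. -/
noncomputable def ψ₁ (l : ℕ) : ℝ :=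
  Real.pi ^ 2 / 6 - ∑ i ∈ Finset.range (l - 1), (1 : ℝ) / (i + 1) ^ 2

/-- Tetragamma function at a positive integer argument:
`ψ₂ l = -2ζ(3) + 2∑_{i=1}^{l-1} 1/i³`, where `ζ(3) = ∑_{i=1}^∞ 1/i³`. -/
noncomputable def ψ₂ (l : ℕ) : ℝ :=
  -2 * (∑' i : ℕ, (1 : ℝ) / (i + 1) ^ 3) +
    2 * ∑ i ∈ Finset.range (l - 1), (1 : ℝ) / (i + 1) ^ 3

/-!
Write `a = m + d` and induct on `m` with `a` fixed, so that `(m, d)` becomes `(m + 1, d - 1)`.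
The left side gains the single term `ψ₀ (m + 1) * ψ₀ (a - m) / (m + 1)`. On the right, lowering `d`
by one changes each of the two sums that have no closed form by a telescoping sum (from
`ψ₀ (k + 1) = ψ₀ k + 1 / k`, `ψ₁ (k + 1) = ψ₁ k - 1 / k ^ 2` and
`1 / (k (k + d)) = (1 / k - 1 / (k + d)) / d`) plus a multiple of the linear sum, which the change
of its coefficient `1 / d - ψ₀ (a + 1)` absorbs exactly. What is left is an identity between
finitely many values of `ψ₀`, `ψ₁`, `ψ₂`, which the recurrences reduce to a rational identity.
-/

-- These recurrences hold at `n = 0` too: both sides are the value at `1`, as `0 - 1 = 0` in `ℕ`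
-- and `1 / 0 = 0`.
theorem ψ₀_succ (n : ℕ) : ψ₀ (n + 1) = ψ₀ n + 1 / n := by
  cases n <;> simp [ψ₀, sum_range_succ, add_assoc]

theorem ψ₁_succ (n : ℕ) : ψ₁ (n + 1) = ψ₁ n - 1 / (n : ℝ) ^ 2 := by
  cases n <;> simp [ψ₁, sum_range_succ, sub_sub]

theorem ψ₂_succ (n : ℕ) : ψ₂ (n + 1) = ψ₂ n + 2 / (n : ℝ) ^ 3 := by
  cases n <;> simp [ψ₂, sum_range_succ]; ring

theorem Finset.sum_Icc_one_eq_sub {M : Type*} [AddCommGroup M] {f g : ℕ → M}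
    (h : ∀ k, 1 ≤ k → g k = f (k + 1) - f k) (n : ℕ) :
    ∑ k ∈ Icc 1 n, g k = f (n + 1) - f 1 := by
  induction n with
  | zero => simp
  | succ n ih => rw [sum_Icc_succ_top (by omega), ih, h (n + 1) (by omega)]; abel

noncomputable def shiftSum (d n : ℕ) : ℝ := ∑ k ∈ Icc 1 n, ψ₀ (k + d) / k

noncomputable def shiftSqSum (d n : ℕ) : ℝ :=
  ∑ k ∈ Icc 1 n, (ψ₀ (k + d) ^ 2 / k + ψ₀ k ^ 2 / ((k : ℝ) + d) -
    ψ₁ (k + d) / k + ψ₁ k / ((k : ℝ) + d))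

theorem shiftSum_succ (d n : ℕ) :
    shiftSum d (n + 1) = shiftSum d n + ψ₀ (n + 1 + d) / (n + 1) := by
  rw [shiftSum, sum_Icc_succ_top (by omega), Nat.cast_succ, shiftSum]

theorem shiftSqSum_succ (d n : ℕ) :
    shiftSqSum d (n + 1) = shiftSqSum d n + (ψ₀ (n + 1 + d) ^ 2 / (n + 1) +
      ψ₀ (n + 1) ^ 2 / ((n : ℝ) + 1 + d) - ψ₁ (n + 1 + d) / (n + 1) +
      ψ₁ (n + 1) / ((n : ℝ) + 1 + d)) := by
  rw [shiftSqSum, sum_Icc_succ_top (by omega), Nat.cast_succ, shiftSqSum]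

theorem shiftSum_shift_succ_sub {d : ℕ} (hd : d ≠ 0) (n : ℕ) :
    shiftSum (d + 1) n - shiftSum d n =
      (ψ₀ (n + 1) - ψ₀ (n + 1 + d) - ψ₀ 1 + ψ₀ (1 + d)) / d := by
  rw [shiftSum, shiftSum, ← sum_sub_distrib]
  refine (sum_Icc_one_eq_sub (f := fun k => (ψ₀ k - ψ₀ (k + d)) / d) (fun k hk => ?_) n).trans
    (by ring)
  have hk : (k : ℝ) ≠ 0 := by positivity
  simp only [← add_assoc, add_right_comm k 1 d, ψ₀_succ]
  push_cast
  field_simp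
  ring

theorem shiftSqSum_sub_shift_succ {d : ℕ} (hd : d ≠ 0) (n : ℕ) :
    let Φ : ℕ → ℝ := fun k => (ψ₀ (k + d) ^ 2 - ψ₁ (k + d)) / d +
      (ψ₀ k ^ 2 + ψ₁ k) * (1 / (d + 1) - 1 / (k + d)) -
      2 * ψ₀ k * ψ₀ (k + d + 1) / (d + 1) + 2 * (ψ₀ k - ψ₀ (k + d + 1)) / (d + 1) ^ 2
    shiftSqSum d n - shiftSqSum (d + 1) n - (2 / (d + 1) - 2 / d) * shiftSum (d + 1) n =
      Φ (n + 1) - Φ 1 := by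
  intro Φ
  rw [shiftSqSum, shiftSqSum, shiftSum, mul_sum, ← sum_sub_distrib, ← sum_sub_distrib]
  refine sum_Icc_one_eq_sub (fun k hk => ?_) n
  have hk : (k : ℝ) ≠ 0 := by positivity
  simp only [Φ, ← add_assoc, add_right_comm k 1 d, ψ₀_succ, ψ₁_succ]
  push_cast
  field_simp
  ring

noncomputable def closedPart (m d : ℕ) : ℝ :=
  (1 / (d : ℝ) ^ 2) * (ψ₀ (d + 1) - ψ₀ (m + d + 1) + ψ₀ (m + 1) - ψ₀ 1) -
    (1 / (2 * (d : ℝ))) * (2 * ψ₀ (m + d + 1) * (ψ₀ (d + 1) + ψ₀ (m + 1) - ψ₀ 1) -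
      ψ₀ (d + 1) ^ 2 + ψ₁ (d + 1) - ψ₀ (m + d + 1) ^ 2 - ψ₁ (m + d + 1)) +
    (1 / 6) * (3 * ψ₀ (m + d + 1) ^ 2 * (ψ₀ (m + 1) - ψ₀ (d + 1)) -
      3 * ψ₀ (m + d + 1) * (2 * ψ₀ 1 * ψ₀ (d + 1) - ψ₀ (d + 1) ^ 2 +
        ψ₁ (d + 1) - ψ₁ (m + d + 1) + ψ₀ 1 ^ 2 + ψ₁ 1) -
      ψ₀ (d + 1) ^ 3 + 3 * ψ₀ 1 * ψ₀ (d + 1) ^ 2 +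
      3 * ψ₁ (m + d + 1) * ψ₀ (m + 1) - 3 * ψ₀ 1 * ψ₁ (d + 1) +
      3 * ψ₀ (d + 1) * (ψ₁ (d + 1) - ψ₁ (m + d + 1) + ψ₀ (m + 1) ^ 2 + ψ₁ (m + 1)) -
      ψ₂ (d + 1) + ψ₀ (m + d + 1) ^ 3 + ψ₂ (m + d + 1))

theorem closedPart_zero (d : ℕ) : closedPart 0 d = 0 := by
  rw [closedPart, zero_add, zero_add]
  ring

theorem sum_ψ₀_mul_ψ₀_div_succ (m d : ℕ) :
    ∑ k ∈ Icc 1 (m + 1), ψ₀ k * ψ₀ (m + 1 + d + 1 - k) / k =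
      ∑ k ∈ Icc 1 m, ψ₀ k * ψ₀ (m + (d + 1) + 1 - k) / k +
        ψ₀ (m + 1) * ψ₀ (d + 1) / (m + 1) := by
  rw [sum_Icc_succ_top (by omega), Nat.cast_succ, show m + 1 + d + 1 - (m + 1) = d + 1 by omega]
  simp only [show m + 1 + d + 1 = m + (d + 1) + 1 by omega]

theorem sum_ψ₀_mul_ψ₀_div_eq {d : ℕ} (hd : d ≠ 0) (m : ℕ) :
    ∑ k ∈ Icc 1 m, ψ₀ k * ψ₀ (m + d + 1 - k) / k =
      1 / 2 * shiftSqSum d m + (1 / d - ψ₀ (m + d + 1)) * shiftSum d m + closedPart m d := by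
  induction m generalizing d with
  | zero => simp [shiftSqSum, shiftSum, closedPart_zero]
  | succ m ih =>
    have hA := shiftSum_shift_succ_sub hd (m + 1)
    have hB := shiftSqSum_sub_shift_succ hd (m + 1)
    rw [shiftSum_succ (d + 1) m] at hA hB
    rw [shiftSqSum_succ (d + 1) m] at hB
    rw [sum_ψ₀_mul_ψ₀_div_succ, ih (d := d + 1) (by omega)]
    -- `hA` and `hB` trade the sums at `(d, m + 1)` for those at `(d + 1, m)`; only closed forms remain.
    linear_combination (norm := skip) (-1 / 2 : ℝ) * hB + (1 / d - ψ₀ (m + 1 + d + 1)) * hA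
    simp only [closedPart, show m + (d + 1) + 1 = m + 1 + d + 1 by omega,
      show m + 1 + (d + 1) = m + 1 + d + 1 by omega, show m + 1 + 1 + d = m + 1 + d + 1 by omega,
      show 1 + d = d + 1 by omega]
    rw [ψ₀_succ (m + 1 + d + 1), ψ₀_succ (d + 1), ψ₁_succ (d + 1), ψ₂_succ (d + 1),
      ψ₀_succ (m + 1), ψ₁_succ (m + 1)]
    push_cast
    ring_nf
    field_simp
    ring

theorem stmt11_general (m a : ℕ) (ha : m < a) :
    ∑ k ∈ Finset.Icc 1 m, ψ₀ k * ψ₀ (a + 1 - k) / (k : ℝ) =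
      (1 / 2) * ∑ k ∈ Finset.Icc 1 m,
          (ψ₀ (k + a - m) ^ 2 / (k : ℝ) + ψ₀ k ^ 2 / ((k + a - m : ℕ) : ℝ) -
            ψ₁ (k + a - m) / (k : ℝ) + ψ₁ k / ((k + a - m : ℕ) : ℝ)) +
        (1 / ((a : ℝ) - m) - ψ₀ (a + 1)) *
          ∑ k ∈ Finset.Icc 1 m, ψ₀ (k + a - m) / (k : ℝ) +
        (1 / ((a : ℝ) - m) ^ 2) *
          (ψ₀ (a - m + 1) - ψ₀ (a + 1) + ψ₀ (m + 1) - ψ₀ 1) -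
        (1 / (2 * ((a : ℝ) - m))) *
          (2 * ψ₀ (a + 1) * (ψ₀ (a - m + 1) + ψ₀ (m + 1) - ψ₀ 1) -
            ψ₀ (a - m + 1) ^ 2 + ψ₁ (a - m + 1) - ψ₀ (a + 1) ^ 2 - ψ₁ (a + 1)) +
        (1 / 6) * (3 * ψ₀ (a + 1) ^ 2 * (ψ₀ (m + 1) - ψ₀ (a - m + 1)) -
          3 * ψ₀ (a + 1) * (2 * ψ₀ 1 * ψ₀ (a - m + 1) - ψ₀ (a - m + 1) ^ 2 +
            ψ₁ (a - m + 1) - ψ₁ (a + 1) + ψ₀ 1 ^ 2 + ψ₁ 1) -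
          ψ₀ (a - m + 1) ^ 3 + 3 * ψ₀ 1 * ψ₀ (a - m + 1) ^ 2 +
          3 * ψ₁ (a + 1) * ψ₀ (m + 1) - 3 * ψ₀ 1 * ψ₁ (a - m + 1) +
          3 * ψ₀ (a - m + 1) * (ψ₁ (a - m + 1) - ψ₁ (a + 1) + ψ₀ (m + 1) ^ 2 +
            ψ₁ (m + 1)) -
          ψ₂ (a - m + 1) + ψ₀ (a + 1) ^ 3 + ψ₂ (a + 1)) := by
  obtain ⟨d, rfl⟩ := Nat.exists_eq_add_of_le ha.le
  have hshift (k : ℕ) : k + (m + d) - m = k + d := by omega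
  simp only [hshift, Nat.add_sub_cancel_left, Nat.cast_add, add_sub_cancel_left]
  rw [sum_ψ₀_mul_ψ₀_div_eq (d := d) (by omega), shiftSqSum, shiftSum, closedPart]
  ring

theorem stmt11 (m a : ℕ) (hm : 0 < m) (ha : m < a) :
    ∑ k ∈ Finset.Icc 1 m, ψ₀ k * ψ₀ (a + 1 - k) / (k : ℝ) =
      (1 / 2) * ∑ k ∈ Finset.Icc 1 m,
          (ψ₀ (k + a - m) ^ 2 / (k : ℝ) + ψ₀ k ^ 2 / ((k + a - m : ℕ) : ℝ) -
            ψ₁ (k + a - m) / (k : ℝ) + ψ₁ k / ((k + a - m : ℕ) : ℝ)) +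
        (1 / ((a : ℝ) - m) - ψ₀ (a + 1)) *
          ∑ k ∈ Finset.Icc 1 m, ψ₀ (k + a - m) / (k : ℝ) +
        (1 / ((a : ℝ) - m) ^ 2) *
          (ψ₀ (a - m + 1) - ψ₀ (a + 1) + ψ₀ (m + 1) - ψ₀ 1) -
        (1 / (2 * ((a : ℝ) - m))) *
          (2 * ψ₀ (a + 1) * (ψ₀ (a - m + 1) + ψ₀ (m + 1) - ψ₀ 1) -
            ψ₀ (a - m + 1) ^ 2 + ψ₁ (a - m + 1) - ψ₀ (a + 1) ^ 2 - ψ₁ (a + 1)) +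
        (1 / 6) * (3 * ψ₀ (a + 1) ^ 2 * (ψ₀ (m + 1) - ψ₀ (a - m + 1)) -
          3 * ψ₀ (a + 1) * (2 * ψ₀ 1 * ψ₀ (a - m + 1) - ψ₀ (a - m + 1) ^ 2 +
            ψ₁ (a - m + 1) - ψ₁ (a + 1) + ψ₀ 1 ^ 2 + ψ₁ 1) -
          ψ₀ (a - m + 1) ^ 3 + 3 * ψ₀ 1 * ψ₀ (a - m + 1) ^ 2 +
          3 * ψ₁ (a + 1) * ψ₀ (m + 1) - 3 * ψ₀ 1 * ψ₁ (a - m + 1) +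
          3 * ψ₀ (a - m + 1) * (ψ₁ (a - m + 1) - ψ₁ (a + 1) + ψ₀ (m + 1) ^ 2 +
            ψ₁ (m + 1)) -
          ψ₂ (a - m + 1) + ψ₀ (a + 1) ^ 3 + ψ₂ (a + 1)) :=
  stmt11_general m a ha
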